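/- With ρ and ρ̄ as above (ρ(x₁…xₗ) = ∑ᵢ ϑ(xᵢ)2^{−i} + 2^{−(l+1)}, ρ̄ analogously with ϑ̄, where ϑ(x)+ϑ̄(x)=1 on {A,B}), if u and v are nonempty words over {A,B} with ρ(u) + ρ̄(v) = 1, then u = v. -/

import Mathlib

/-!
For binary `θ`, `rho θ (x :: w) = (θ x + rho θ w) / 2` with `rho θ w ∈ (0, 1)`, so `θ x` is the
integer part of `2 * rho θ (x :: w)` and `rho θ (x :: w) ≠ 1 / 2 = rho θ []`; by induction `rho θ`
is injective. Complementary digits give `rho θ w + rho θbar w = 1`, so the hypothesis says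
`rho θ u = rho θ v`.
-/

/-- The end-marked binary encoding of a word over a two-element alphabet. -/
noncomputable def rho (θ : Bool → ℝ) (w : List Bool) : ℝ :=
  (∑ i : Fin w.length, θ (w.get i) * (1 / 2 : ℝ) ^ (i.val + 1)) + (1 / 2 : ℝ) ^ (w.length + 1)

lemma rho_nil (θ : Bool → ℝ) : rho θ [] = 1 / 2 := by
  simp [rho]

lemma rho_cons (θ : Bool → ℝ) (x : Bool) (w : List Bool) :
    rho θ (x :: w) = (θ x + rho θ w) / 2 := by
  simp only [rho, List.length_cons, Fin.sum_univ_succ, List.get_cons_zero, List.get_cons_succ',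
    Fin.val_zero, Fin.val_succ, pow_succ' _ (_ + 1), mul_left_comm _ (1 / 2 : ℝ),
    ← Finset.mul_sum]
  ring

lemma rho_mem_Ioo (θ : Bool → ℝ) (hθ : ∀ x, θ x ∈ Set.Icc 0 1) (w : List Bool) :
    rho θ w ∈ Set.Ioo 0 1 := by
  induction w with
  | nil => rw [rho_nil]; norm_num
  | cons x w ih =>
    obtain ⟨hx₀, hx₁⟩ := hθ x
    obtain ⟨ih₀, ih₁⟩ := ih
    rw [rho_cons]
    constructor <;> linarith

lemma eq_of_add_eq_add_of_mem_Ioo {d d' s s' : ℝ} (hd : d = 0 ∨ d = 1) (hd' : d' = 0 ∨ d' = 1)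
    (hs : s ∈ Set.Ioo 0 1) (hs' : s' ∈ Set.Ioo 0 1) (h : d + s = d' + s') : d = d' := by
  obtain ⟨hs₀, hs₁⟩ := hs
  obtain ⟨hs₀', hs₁'⟩ := hs'
  rcases hd with rfl | rfl <;> rcases hd' with rfl | rfl <;> first | rfl | linarith

lemma add_ne_one_of_mem_Ioo {d s : ℝ} (hd : d = 0 ∨ d = 1) (hs : s ∈ Set.Ioo 0 1) :
    d + s ≠ 1 := by
  obtain ⟨hs₀, hs₁⟩ := hs
  rcases hd with rfl | rfl <;> linarith

section Injectivity

variable {θ : Bool → ℝ} (hθ : ∀ x, θ x = 0 ∨ θ x = 1)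
include hθ

lemma rho_mem_Ioo_of_binary (w : List Bool) : rho θ w ∈ Set.Ioo 0 1 :=
  rho_mem_Ioo θ (fun x => by rcases hθ x with h | h <;> simp [h]) w

lemma rho_cons_ne_rho_nil (x : Bool) (w : List Bool) : rho θ (x :: w) ≠ rho θ [] := by
  rw [rho_cons, rho_nil]
  intro h
  exact add_ne_one_of_mem_Ioo (hθ x) (rho_mem_Ioo_of_binary hθ w) (by linarith)

lemma rho_injective (hinj : Function.Injective θ) : Function.Injective (rho θ) := by
  intro u v h
  induction u generalizing v with
  | nil =>
    cases v with
    | nil => rfl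
    | cons y v => exact absurd h.symm (rho_cons_ne_rho_nil hθ y v)
  | cons x u ih =>
    cases v with
    | nil => exact absurd h (rho_cons_ne_rho_nil hθ x u)
    | cons y v =>
      rw [rho_cons, rho_cons] at h
      have hxy : θ x = θ y := eq_of_add_eq_add_of_mem_Ioo (hθ x) (hθ y)
        (rho_mem_Ioo_of_binary hθ u) (rho_mem_Ioo_of_binary hθ v) (by linarith)
      rw [hinj hxy, ih (by linarith)]

end Injectivity

lemma rho_add_rho_of_add_eq_one {θ θbar : Bool → ℝ} (hsum : ∀ x, θ x + θbar x = 1)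
    (w : List Bool) : rho θ w + rho θbar w = 1 := by
  induction w with
  | nil => rw [rho_nil, rho_nil]; norm_num
  | cons x w ih =>
    rw [rho_cons, rho_cons]
    linarith [hsum x]

theorem stmt_3_general (θ θbar : Bool → ℝ)
    (hθ : ∀ x, θ x = 0 ∨ θ x = 1)
    (hsum : ∀ x, θ x + θbar x = 1) (hinj : θ true ≠ θ false)
    (u v : List Bool)
    (h : rho θ u + rho θbar v = 1) :
    u = v :=
  rho_injective hθ (Bool.injective_iff.2 hinj.symm)
    (by linarith [rho_add_rho_of_add_eq_one hsum v])

theorem stmt_3 (θ θbar : Bool → ℝ)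
    (hθ : ∀ x, θ x = 0 ∨ θ x = 1) (hθbar : ∀ x, θbar x = 0 ∨ θbar x = 1)
    (hsum : ∀ x, θ x + θbar x = 1) (hinj : θ true ≠ θ false)
    (u v : List Bool) (hu : u ≠ []) (hv : v ≠ [])
    (h : rho θ u + rho θbar v = 1) :
    u = v :=
  stmt_3_general θ θbar hθ hsum hinj u v h
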